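/- arXiv:1712.09521 — 3 statements merged into one kernel-verified Lean document; each statement's English description precedes it below -/
import Mathlib

section
/- Let θ : (R₀, ∞) → ℝ be smooth with θ' > 0 and θ'' ≥ 0, let n ≥ 1 and 0 < p ≤ 1, and let r : [0, T) → (R₀, ∞) be the maximal solution of the ODE r' = θ(r)^p / (n^p θ'(r)^p) with r(0) = r₀. Then T = ∞, i.e. the solution exists for all positive times. -/
open Set

open Filter MeasureTheory intervalIntegral Real in
/-- Auxiliary: construction of a global solution via the inverse of the time map. -/
lemma ode_global_sol_aux (R₀ r₀ : ℝ) (θ : ℝ → ℝ) (n : ℕ) (p : ℝ)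
    (hR₀ : 0 < R₀) (hr₀ : R₀ < r₀) (hn : 1 ≤ n) (hp : 0 < p) (hp1 : p ≤ 1)
    (hθ : ContDiffOn ℝ (⊤ : ℕ∞) θ (Ioi R₀))
    (hθpos : ∀ x ∈ Ioi R₀, 0 < θ x)
    (hθ' : ∀ x ∈ Ioi R₀, 0 < deriv θ x)
    (hθ'' : ∀ x ∈ Ioi R₀, 0 ≤ deriv (deriv θ) x) :
    ∃ ρ : ℝ → ℝ, ρ 0 = r₀ ∧ ∀ t, 0 ≤ t →
      R₀ < ρ t ∧ HasDerivAt ρ (θ (ρ t) ^ p / ((n : ℝ) ^ p * (deriv θ (ρ t)) ^ p)) t := by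
  set f : ℝ → ℝ := fun x => θ x ^ p / ((n : ℝ) ^ p * (deriv θ x) ^ p) with hf_def
  have hnR : (1:ℝ) ≤ (n:ℝ) := by exact_mod_cast hn
  have hnpos : (0:ℝ) < (n:ℝ) := by linarith
  have hopen : IsOpen (Ioi R₀) := isOpen_Ioi
  have hθcont : ContinuousOn θ (Ioi R₀) := hθ.continuousOn
  have hθ'cont : ContinuousOn (deriv θ) (Ioi R₀) :=
    hθ.continuousOn_deriv_of_isOpen hopen (by simp)
  have hθdiff : ∀ x ∈ Ioi R₀, DifferentiableAt ℝ θ x := fun x hx =>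
    (hθ.differentiableOn (by simp)).differentiableAt (hopen.mem_nhds hx)
  have hθ'diff : ∀ x ∈ Ioi R₀, DifferentiableAt ℝ (deriv θ) x := fun x hx =>
    ((hθ.deriv_of_isOpen hopen (m := 1) (by exact WithTop.coe_le_coe.mpr le_top)).differentiableOn one_ne_zero).differentiableAt
      (hopen.mem_nhds hx)
  have hfpos : ∀ x ∈ Ioi R₀, 0 < f x := fun x hx =>
    div_pos (rpow_pos_of_pos (hθpos x hx) p)
      (mul_pos (rpow_pos_of_pos hnpos p) (rpow_pos_of_pos (hθ' x hx) p))
  have hfcont : ContinuousOn f (Ioi R₀) := by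
    apply ContinuousOn.div
    · exact hθcont.rpow_const (fun x hx => Or.inl (hθpos x hx).ne')
    · exact continuousOn_const.mul
        (hθ'cont.rpow_const (fun x hx => Or.inl (hθ' x hx).ne'))
    · intro x hx
      exact (mul_pos (rpow_pos_of_pos hnpos p) (rpow_pos_of_pos (hθ' x hx) p)).ne'
  -- the linear growth bound
  set g : ℝ → ℝ := fun y => θ y / deriv θ y with hg_def
  set c : ℝ := 1 + g r₀ - r₀ with hc_def
  have hgpos : ∀ x ∈ Ioi R₀, 0 < g x := fun x hx =>
    div_pos (hθpos x hx) (hθ' x hx)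
  have hgderiv : ∀ y ∈ Ioi R₀, HasDerivAt g
      ((deriv θ y * deriv θ y - θ y * deriv (deriv θ) y) / (deriv θ y) ^ 2) y := fun y hy =>
    ((hθdiff y hy).hasDerivAt).div ((hθ'diff y hy).hasDerivAt) (hθ' y hy).ne'
  have hr₀mem : r₀ ∈ Ioi R₀ := hr₀
  have hgbound : ∀ x, r₀ ≤ x → g x ≤ g r₀ + (x - r₀) := by
    intro x hx
    set h : ℝ → ℝ := fun y => y - r₀ + g r₀ - g y with hh_def
    have hmemIci : ∀ y ∈ Ici r₀, y ∈ Ioi R₀ := fun y hy => lt_of_lt_of_le hr₀ hy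
    have hhd : ∀ y ∈ Ioi R₀, HasDerivAt h
        (1 - (deriv θ y * deriv θ y - θ y * deriv (deriv θ) y) / (deriv θ y) ^ 2) y := by
      intro y hy
      have := ((hasDerivAt_id y).sub_const r₀).add_const (g r₀)
      exact this.sub (hgderiv y hy)
    have hmono : MonotoneOn h (Ici r₀) := by
      apply monotoneOn_of_deriv_nonneg (convex_Ici r₀)
      · intro y hy
        exact (hhd y (hmemIci y hy)).continuousAt.continuousWithinAt
      · intro y hy
        rw [interior_Ici] at hy
        exact (hhd y (hmemIci y (show r₀ ≤ y from le_of_lt hy))).differentiableAt.differentiableWithinAt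
      · intro y hy
        rw [interior_Ici] at hy
        have hy' : y ∈ Ioi R₀ := hmemIci y (show r₀ ≤ y from le_of_lt hy)
        rw [(hhd y hy').deriv]
        have h1 : (deriv θ y * deriv θ y - θ y * deriv (deriv θ) y) / (deriv θ y) ^ 2 ≤ 1 := by
          rw [div_le_one (pow_pos (hθ' y hy') 2)]
          nlinarith [mul_nonneg (hθpos y hy').le (hθ'' y hy'), sq_nonneg (deriv θ y)]
        linarith
    have := hmono (self_mem_Ici) hx hx
    simp only [hh_def, sub_self, zero_add] at this
    linarith
  have hfbound : ∀ x, r₀ ≤ x → f x ≤ c + x := by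
    intro x hx
    have hxmem : x ∈ Ioi R₀ := lt_of_lt_of_le hr₀ hx
    have hθx := hθpos x hxmem
    have hθ'x := hθ' x hxmem
    have h1 : f x = (θ x / ((n : ℝ) * deriv θ x)) ^ p := by
      rw [Real.div_rpow hθx.le (by positivity), Real.mul_rpow (by positivity) hθ'x.le]
    have h2 : θ x / ((n : ℝ) * deriv θ x) ≤ g x := by
      apply div_le_div_of_nonneg_left hθx.le hθ'x
      nlinarith
    have hgx := hgpos x hxmem
    have h3 : (θ x / ((n : ℝ) * deriv θ x)) ^ p ≤ g x ^ p :=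
      Real.rpow_le_rpow (by positivity) h2 hp.le
    have h4 : g x ^ p ≤ 1 + g x := by
      rcases le_total (g x) 1 with hg1 | hg1
      · have := Real.rpow_le_one hgx.le hg1 hp.le
        linarith
      · have := Real.rpow_le_rpow_of_exponent_le hg1 hp1
        rw [Real.rpow_one] at this
        linarith
    have h5 := hgbound x hx
    rw [h1]
    calc (θ x / ((n : ℝ) * deriv θ x)) ^ p ≤ g x ^ p := h3
      _ ≤ 1 + g x := h4
      _ ≤ 1 + (g r₀ + (x - r₀)) := by linarith
      _ = c + x := by rw [hc_def]; ring
  have hcr₀ : 0 < c + r₀ := by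
    have := hgpos r₀ hr₀mem
    rw [hc_def]; linarith
  -- the time map F
  have hfinvcont : ContinuousOn (fun y => (f y)⁻¹) (Ioi R₀) :=
    hfcont.inv₀ (fun x hx => (hfpos x hx).ne')
  set F : ℝ → ℝ := fun x => ∫ y in r₀..x, (f y)⁻¹ with hF_def
  have hinteg : ∀ a b : ℝ, R₀ < a → R₀ < b →
      IntervalIntegrable (fun y => (f y)⁻¹) volume a b := by
    intro a b ha hb
    apply ContinuousOn.intervalIntegrable
    apply hfinvcont.mono
    intro y hy
    exact lt_of_lt_of_le (lt_min ha hb) hy.1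
  have hFderiv : ∀ x, R₀ < x → HasDerivAt F (f x)⁻¹ x := by
    intro x hx
    exact intervalIntegral.integral_hasDerivAt_right (hinteg r₀ x hr₀ hx)
      ⟨Ioi R₀, hopen.mem_nhds hx, (hfinvcont.aestronglyMeasurable hopen.measurableSet)⟩
      (hfinvcont.continuousAt (hopen.mem_nhds hx))
  set r₁ : ℝ := (R₀ + r₀) / 2 with hr₁_def
  have hr₁a : R₀ < r₁ := by rw [hr₁_def]; linarith
  have hr₁b : r₁ < r₀ := by rw [hr₁_def]; linarith
  have hFmono : StrictMonoOn F (Ici r₁) := by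
    apply strictMonoOn_of_deriv_pos (convex_Ici r₁)
    · intro y hy
      exact (hFderiv y (lt_of_lt_of_le hr₁a hy)).continuousAt.continuousWithinAt
    · intro y hy
      rw [interior_Ici] at hy
      have hy' : R₀ < y := lt_trans hr₁a hy
      rw [(hFderiv y hy').deriv]
      exact inv_pos.mpr (hfpos y hy')
  -- the globally defined monotone surjection G
  set G : ℝ → ℝ := fun x => F (max x r₁) + min (x - r₁) 0 with hG_def
  have hGeq : ∀ y, r₁ ≤ y → G y = F y := by
    intro y hy
    simp [hG_def, max_eq_left hy, min_eq_right (sub_nonneg.2 hy)]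
  have hGeq' : ∀ y, y ≤ r₁ → G y = F r₁ + (y - r₁) := by
    intro y hy
    simp [hG_def, max_eq_right hy, min_eq_left (sub_nonpos.2 hy)]
  have hGcont : Continuous G := by
    apply Continuous.add
    · rw [continuous_iff_continuousAt]
      intro x
      have h1 : ContinuousAt F (max x r₁) :=
        (hFderiv (max x r₁) (lt_of_lt_of_le hr₁a (le_max_right _ _))).continuousAt
      have hm : Continuous fun x : ℝ => max x r₁ := continuous_id.max continuous_const
      exact ContinuousAt.comp (x := x) (g := F) (f := fun b : ℝ => max b r₁) h1
        hm.continuousAt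
    · exact (continuous_id.sub continuous_const).min continuous_const
  have hGmono : StrictMono G := by
    intro x y hxy
    rcases le_or_gt y r₁ with hy | hy
    · rw [hGeq' x (le_of_lt (lt_of_lt_of_le hxy hy)), hGeq' y hy]
      linarith
    · rcases le_total x r₁ with hx | hx
      · rw [hGeq' x hx, hGeq y hy.le]
        have h1 : F r₁ < F y := hFmono self_mem_Ici hy.le hy
        have h2 : x - r₁ ≤ 0 := sub_nonpos.2 hx
        linarith
      · rw [hGeq x hx, hGeq y (le_trans hx (le_of_lt hxy))]
        exact hFmono hx (le_trans hx (le_of_lt hxy)) hxy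
  -- G tends to -∞ at -∞
  have hGbot : Tendsto G atBot atBot := by
    have heq : G =ᶠ[atBot] fun x => F r₁ + (x - r₁) :=
      (eventually_le_atBot r₁).mono fun x hx => hGeq' x hx
    apply Tendsto.congr' heq.symm
    apply tendsto_atBot_add_const_left
    exact tendsto_atBot_add_const_right _ _ tendsto_id
  -- the logarithmic lower bound, giving G → ∞ at ∞
  have hlog : ∀ x, r₀ ≤ x → Real.log (c + x) - Real.log (c + r₀) ≤ F x := by
    intro x hx
    have hInt1 : IntervalIntegrable (fun y => (c + y)⁻¹) volume r₀ x := by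
      apply ContinuousOn.intervalIntegrable
      apply ContinuousOn.inv₀ (by fun_prop)
      intro y hy
      rw [uIcc_of_le hx] at hy
      have : r₀ ≤ y := hy.1
      linarith
    have hcmp : ∫ y in r₀..x, (c + y)⁻¹ ≤ F x := by
      apply intervalIntegral.integral_mono_on hx hInt1
        (hinteg r₀ x hr₀ (lt_of_lt_of_le hr₀ hx))
      intro y hy
      have hy1 : r₀ ≤ y := hy.1
      have hymem : y ∈ Ioi R₀ := lt_of_lt_of_le hr₀ hy1
      apply inv_anti₀ (hfpos y hymem)
      exact hfbound y hy1
    have hcalc : ∫ y in r₀..x, (c + y)⁻¹ = Real.log (c + x) - Real.log (c + r₀) := by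
      have h1 : (fun y : ℝ => (c + y)⁻¹) = fun y => (y + c)⁻¹ := by
        funext y; rw [add_comm]
      rw [h1]
      have h2 := intervalIntegral.integral_comp_add_right (fun y : ℝ => y⁻¹) c (a := r₀) (b := x)
      rw [h2]
      have h3 : (0:ℝ) ∉ Set.uIcc (r₀ + c) (x + c) := by
        rw [Set.uIcc_of_le (by linarith)]
        intro h
        have : 0 < r₀ + c := by linarith
        linarith [h.1]
      have h4 := integral_one_div h3
      simp only [one_div] at h4
      rw [h4, Real.log_div (by linarith) (by linarith)]
      ring_nf
    rw [← hcalc]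
    exact hcmp
  have hGtop : Tendsto G atTop atTop := by
    apply tendsto_atTop_mono' atTop
      (show ∀ᶠ x in atTop, Real.log (c + x) - Real.log (c + r₀) ≤ G x from
        (eventually_ge_atTop r₀).mono fun x hx => by
          rw [hGeq x (le_trans (le_of_lt hr₁b) hx)]
          exact hlog x hx)
    have h1 : Tendsto (fun x : ℝ => c + x) atTop atTop :=
      tendsto_atTop_add_const_left _ _ tendsto_id
    have h2 : Tendsto (fun x : ℝ => Real.log (c + x)) atTop atTop :=
      Real.tendsto_log_atTop.comp h1
    simpa [sub_eq_add_neg] using tendsto_atTop_add_const_right _ (-Real.log (c + r₀)) h2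
  have hGsurj : Function.Surjective G := hGcont.surjective hGtop hGbot
  -- the solution is the inverse of G
  set iso := StrictMono.orderIsoOfSurjective G hGmono hGsurj with hiso_def
  set ρ : ℝ → ℝ := fun t => iso.symm t with hρ_def
  have hGρ : ∀ t, G (ρ t) = t := fun t =>
    StrictMono.orderIsoOfSurjective_self_symm_apply G hGmono hGsurj t
  have hρcont : Continuous ρ := by
    have := iso.symm.continuous
    exact this
  have hFr₀ : F r₀ = 0 := intervalIntegral.integral_same
  have hGr₀ : G r₀ = 0 := by rw [hGeq r₀ (le_of_lt hr₁b)]; exact hFr₀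
  have hρ0 : ρ 0 = r₀ := by
    have : G (ρ 0) = G r₀ := by rw [hGρ 0, hGr₀]
    exact hGmono.injective this
  refine ⟨ρ, hρ0, fun t ht => ?_⟩
  have hρt : r₀ ≤ ρ t := by
    have : G r₀ ≤ G (ρ t) := by rw [hGρ t, hGr₀]; exact ht
    exact (hGmono.le_iff_le).1 this
  have hρtR : R₀ < ρ t := lt_of_lt_of_le hr₀ hρt
  refine ⟨hρtR, ?_⟩
  have hGF : G =ᶠ[nhds (ρ t)] F := by
    filter_upwards [(isOpen_Ioi (a := r₁)).mem_nhds (show ρ t ∈ Ioi r₁ from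
      lt_of_lt_of_le hr₁b hρt)] with y hy
    exact hGeq y (le_of_lt hy)
  have hGd : HasDerivAt G (f (ρ t))⁻¹ (ρ t) :=
    (hFderiv (ρ t) hρtR).congr_of_eventuallyEq hGF
  have hfne : (f (ρ t))⁻¹ ≠ 0 := inv_ne_zero (hfpos (ρ t) hρtR).ne'
  have hmain : HasDerivAt ρ ((f (ρ t))⁻¹)⁻¹ t := by
    apply HasDerivAt.of_local_left_inverse hρcont.continuousAt hGd hfne
    exact Filter.Eventually.of_forall hGρ
  rw [inv_inv] at hmain
  exact hmain

/-- Let `θ` be smooth on `(R₀, ∞)` with `θ' > 0` and `θ'' ≥ 0`,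
`n ≥ 1`, `0 < p ≤ 1`. Then the maximal solution of
`r' = θ(r)^p / (n^p θ'(r)^p)`, `r(0) = r₀ > R₀`, exists for all positive times:
there is no finite time `T` at which a solution on `[0, T)` is maximal
(i.e. admits no solution on a longer interval). -/
theorem ode_maximal_solution_global (R₀ r₀ T : ℝ) (θ : ℝ → ℝ) (n : ℕ) (p : ℝ)
    (r : ℝ → ℝ)
    (hR₀ : 0 < R₀) (hr₀ : r₀ ∈ Ioi R₀) (hn : 1 ≤ n) (hp : 0 < p) (hp1 : p ≤ 1)
    (hθ : ContDiffOn ℝ (⊤ : ℕ∞) θ (Ioi R₀))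
    (hθpos : ∀ x ∈ Ioi R₀, 0 < θ x)
    (hθ' : ∀ x ∈ Ioi R₀, 0 < deriv θ x)
    (hθ'' : ∀ x ∈ Ioi R₀, 0 ≤ deriv (deriv θ) x)
    (hT : 0 < T)
    (hr0 : r 0 = r₀)
    (hsol : ∀ t ∈ Ico (0:ℝ) T, r t ∈ Ioi R₀ ∧
      HasDerivAt r (θ (r t) ^ p / ((n : ℝ) ^ p * (deriv θ (r t)) ^ p)) t)
    -- maximality: there is no solution on a strictly longer interval
    (hmax : ∀ T' : ℝ, T < T' → ∀ r' : ℝ → ℝ, r' 0 = r₀ →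
      (∀ t ∈ Ico (0:ℝ) T', r' t ∈ Ioi R₀ ∧
        HasDerivAt r' (θ (r' t) ^ p / ((n : ℝ) ^ p * (deriv θ (r' t)) ^ p)) t) →
      False) :
    False := by
  obtain ⟨ρ, hρ0, hρ⟩ := ode_global_sol_aux R₀ r₀ θ n p hR₀ hr₀ hn hp hp1 hθ hθpos hθ' hθ''
  exact hmax (T + 1) (by linarith) ρ hρ0 (fun t ht => hρ t ht.1)
end

section
/- Let v ≥ 1 be real, let 0 < β < 1/(2v) and 1 − β/2 < α < 1, and define f(v) = −log(v^{−α} − β). Then v^{−α} − β > 0, moreover 1 − f'(v)·v = ((1−α)v^{−α} − β)/(v^{−α} − β) ≤ −β/2 < 0, and f'(v)² − (2/v)f'(v) − f''(v) = α(α−1)v^{−(α+2)}/(v^{−α} − β) ≤ (3/4)(α−1)/v² < 0. -/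
/-!
With `A = v^{-α}` one has `f' = α v^{-α-1}/(A - β)` near `v`, so both identities are rational
identities in `A` and `v` once `v^{-α-1} = A/v` and `v^{-α-2} = A/v²`. For the bounds,
`β < 1/(2v) < 1/v ≤ A ≤ 1` and `α > 1 - β/2 > 3/4`; the second bound then only uses
`A/(A - β) ≥ 1` and `α ≥ 3/4`.
-/

open Filter Topology

section NegLogRpowSub

variable {α β x : ℝ}

theorem hasDerivAt_neg_log_rpow_sub (hx : x ≠ 0) (h : x ^ (-α) - β ≠ 0) :
    HasDerivAt (fun y => -Real.log (y ^ (-α) - β)) (α * (x ^ (-α - 1) / (x ^ (-α) - β))) x :=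
  (((Real.hasDerivAt_rpow_const (Or.inl hx)).sub_const β).log h).neg.congr_deriv (by ring)

theorem deriv_neg_log_rpow_sub_eventuallyEq (hx : x ≠ 0) (h : x ^ (-α) - β ≠ 0) :
    deriv (fun y => -Real.log (y ^ (-α) - β)) =ᶠ[𝓝 x]
      fun y => α * (y ^ (-α - 1) / (y ^ (-α) - β)) := by
  have hcont : ContinuousAt (fun y : ℝ => y ^ (-α) - β) x :=
    (Real.continuousAt_rpow_const x (-α) (Or.inl hx)).sub continuousAt_const
  filter_upwards [eventually_ne_nhds hx, hcont.eventually_ne h] with y hy hy'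
  exact (hasDerivAt_neg_log_rpow_sub hy hy').deriv

theorem hasDerivAt_deriv_neg_log_rpow_sub (hx : x ≠ 0) (h : x ^ (-α) - β ≠ 0) :
    HasDerivAt (deriv fun y => -Real.log (y ^ (-α) - β))
      (α * (((-α - 1) * (x ^ (-α) / x ^ 2) * (x ^ (-α) - β) + α * (x ^ (-α) / x) ^ 2)
        / (x ^ (-α) - β) ^ 2)) x := by
  have hnum := Real.hasDerivAt_rpow_const (p := -α - 1) (Or.inl hx)
  have hden := (Real.hasDerivAt_rpow_const (p := -α) (Or.inl hx)).sub_const β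
  refine (((hnum.div hden h).const_mul α).congr_of_eventuallyEq
    (deriv_neg_log_rpow_sub_eventuallyEq hx h)).congr_deriv ?_
  rw [Real.rpow_sub_one hx, Real.rpow_sub_one hx]
  field_simp
  ring

end NegLogRpowSub

theorem one_sub_mul_sub_div_le_neg_half {a A β : ℝ} (hβ : 0 < β) (hβA : β < A) (hA1 : A ≤ 1)
    (ha : 1 - β / 2 < a) : ((1 - a) * A - β) / (A - β) ≤ -β / 2 := by
  rw [div_le_iff₀ (sub_pos.2 hβA)]
  nlinarith

theorem mul_sub_one_mul_div_le {a A β w : ℝ} (hβ : 0 ≤ β) (hβA : β < A) (hw : 0 < w)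
    (ha : 3 / 4 ≤ a) (ha1 : a ≤ 1) : a * (a - 1) * (A / w) / (A - β) ≤ 3 / 4 * (a - 1) / w := by
  have hpos : 0 < A - β := sub_pos.2 hβA
  rw [div_le_div_iff₀ hpos hw, mul_assoc _ (A / w), div_mul_cancel₀ A hw.ne']
  nlinarith [mul_nonneg (mul_nonneg (sub_nonneg.2 ha1) (sub_nonneg.2 ha)) (hβ.trans hβA.le),
    mul_nonneg (sub_nonneg.2 ha1) hβ]

/-- Elementary computations for `f(v) = −log(v^{−α} − β)` with
`v ≥ 1`, `0 < β < 1/(2v)` and `1 − β/2 < α < 1`. -/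
theorem test_function_inverse_alpha_computations (v α β : ℝ)
    (hv : 1 ≤ v) (hβ0 : 0 < β) (hβ : β < 1/(2*v)) (hα1 : 1 - β/2 < α) (hα2 : α < 1) :
    let f : ℝ → ℝ := fun x => -Real.log (x ^ (-α) - β)
    0 < v ^ (-α) - β ∧
    1 - deriv f v * v = ((1 - α) * v ^ (-α) - β) / (v ^ (-α) - β) ∧
    1 - deriv f v * v ≤ -β/2 ∧ -β/2 < 0 ∧
    (deriv f v) ^ 2 - (2/v) * deriv f v - deriv (deriv f) v
      = α * (α - 1) * v ^ (-(α + 2)) / (v ^ (-α) - β) ∧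
    (deriv f v) ^ 2 - (2/v) * deriv f v - deriv (deriv f) v ≤ (3/4) * (α - 1) / v ^ 2 ∧
    (3/4) * (α - 1) / v ^ 2 < 0 := by
  intro f
  have hv0 : 0 < v := by linarith
  have hα : 3 / 4 ≤ α := by
    have : 1 / (2 * v) ≤ 1 / 2 := by gcongr; linarith
    linarith
  have hA1 : v ^ (-α) ≤ 1 := Real.rpow_le_one_of_one_le_of_nonpos hv (by linarith)
  have hβA : β < v ^ (-α) := calc
    β < 1 / (2 * v) := hβ
    _ < 1 / v := by gcongr; linarith
    _ = v ^ (-1 : ℝ) := by rw [Real.rpow_neg_one, one_div]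
    _ ≤ v ^ (-α) := Real.rpow_le_rpow_of_exponent_le hv (by linarith)
  have hpos : 0 < v ^ (-α) - β := sub_pos.2 hβA
  have hd1 : deriv f v = α * (v ^ (-α) / v / (v ^ (-α) - β)) := by
    rw [(hasDerivAt_neg_log_rpow_sub hv0.ne' hpos.ne').deriv, Real.rpow_sub_one hv0.ne']
  have hd2 : deriv (deriv f) v = _ := (hasDerivAt_deriv_neg_log_rpow_sub hv0.ne' hpos.ne').deriv
  have hrpow : v ^ (-(α + 2)) = v ^ (-α) / v ^ 2 := by
    rw [neg_add', Real.rpow_sub hv0, Real.rpow_two]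
  have hfirst : 1 - deriv f v * v = ((1 - α) * v ^ (-α) - β) / (v ^ (-α) - β) := by
    rw [hd1]
    field_simp
    ring
  have hsecond : (deriv f v) ^ 2 - (2/v) * deriv f v - deriv (deriv f) v
      = α * (α - 1) * v ^ (-(α + 2)) / (v ^ (-α) - β) := by
    rw [hd1, hd2, hrpow]
    field_simp
    ring
  refine ⟨hpos, hfirst, ?_, by linarith, hsecond, ?_,
    div_neg_of_neg_of_pos (by linarith) (by positivity)⟩
  · rw [hfirst]
    exact one_sub_mul_sub_div_le_neg_half hβ0 hβA hA1 hα1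
  · rw [hsecond, hrpow]
    exact mul_sub_one_mul_div_le hβ0.le hβA (by positivity) hα hα2.le
end

section
/- Let ρ̃ : [0, ∞) → ℝ be locally Lipschitz. Suppose that for every ε > 0 there exist δ_ε > 0 and T_ε ≥ 0 such that for almost every t ≥ T_ε, if ρ̃(t) ≥ ε then ρ̃'(t) < −δ_ε. Then limsup_{t→∞} ρ̃(t) ≤ 0. -/
/-!
A locally Lipschitz function is absolutely continuous on compact intervals, so it is the integral
of its a.e. derivative. Fix `ε > 0`. On any interval `[p, q] ⊆ [T_ε, ∞)` on which `ρ̃ ≥ ε`, this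
gives `ρ̃ q ≤ ρ̃ p - δ_ε (q - p)`. Hence `ρ̃` cannot stay `≥ ε` on all of `[T_ε, ∞)`, and once it
has dropped to `ε` it can never climb above `ε` again: from the last time `σ ≤ t` with
`ρ̃ σ ≤ ε` the function only decreases. So eventually `ρ̃ ≤ ε`.
-/

open MeasureTheory Set Filter

theorem LocallyLipschitz.absolutelyContinuousOnInterval {f : ℝ → ℝ} (hf : LocallyLipschitz f)
    (a b : ℝ) : AbsolutelyContinuousOnInterval f a b := by
  obtain ⟨K, hK⟩ := hf.locallyLipschitzOn.exists_lipschitzOnWith_of_compact (s := uIcc a b)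
    isCompact_uIcc
  exact hK.absolutelyContinuousOnInterval

theorem AbsolutelyContinuousOnInterval.sub_le_mul_of_ae_deriv_le {f : ℝ → ℝ} {a b c : ℝ}
    (hf : AbsolutelyContinuousOnInterval f a b) (hab : a ≤ b)
    (h : ∀ᵐ x, x ∈ Ioc a b → deriv f x ≤ c) : f b - f a ≤ c * (b - a) := by
  have h' : ∀ᵐ x ∂volume.restrict (Icc a b), deriv f x ≤ c := by
    rw [← Measure.restrict_congr_set Ioc_ae_eq_Icc, ae_restrict_iff' measurableSet_Ioc]
    exact h
  calc f b - f a = ∫ x in a..b, deriv f x := hf.integral_deriv_eq_sub.symm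
    _ ≤ ∫ _ in a..b, c :=
      intervalIntegral.integral_mono_ae_restrict hab hf.intervalIntegrable_deriv
        intervalIntegrable_const h'
    _ = c * (b - a) := by rw [intervalIntegral.integral_const, smul_eq_mul, mul_comm]

theorem ContinuousOn.exists_forall_Ioc_lt_of_le {f : ℝ → ℝ} {a b c : ℝ}
    (hf : ContinuousOn f (Icc a b)) (hab : a ≤ b) (ha : f a ≤ c) :
    ∃ σ ∈ Icc a b, f σ ≤ c ∧ ∀ u ∈ Ioc σ b, c < f u := by
  have hclosed : IsClosed (Icc a b ∩ f ⁻¹' Iic c) :=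
    hf.preimage_isClosed_of_isClosed isClosed_Icc isClosed_Iic
  obtain ⟨σ, ⟨hσ, hσc⟩, hmax⟩ :=
    (isCompact_Icc.of_isClosed_subset hclosed inter_subset_left).exists_isGreatest
      ⟨a, left_mem_Icc.2 hab, ha⟩
  refine ⟨σ, hσ, hσc, fun u hu => lt_of_not_ge fun hu' => ?_⟩
  exact hu.1.not_ge (hmax ⟨⟨hσ.1.trans hu.1.le, hu.2⟩, hu'⟩)

theorem LocallyLipschitz.eventually_le_of_ae_deriv_lt {f : ℝ → ℝ} (hf : LocallyLipschitz f)
    {ε δ T : ℝ} (hδ : 0 < δ) (h : ∀ᵐ t, T ≤ t → ε ≤ f t → deriv f t < -δ) :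
    ∀ᶠ t in atTop, f t ≤ ε := by
  have decay : ∀ p q, T ≤ p → p ≤ q → (∀ u ∈ Ioc p q, ε ≤ f u) → f q ≤ f p - δ * (q - p) := by
    intro p q hTp hpq hge
    have hderiv : ∀ᵐ u, u ∈ Ioc p q → deriv f u ≤ -δ := by
      filter_upwards [h] with u hu hmem using (hu (hTp.trans hmem.1.le) (hge u hmem)).le
    have := (hf.absolutelyContinuousOnInterval p q).sub_le_mul_of_ae_deriv_le hpq hderiv
    linarith
  obtain ⟨t₀, hTt₀, ht₀⟩ : ∃ t₀, T ≤ t₀ ∧ f t₀ ≤ ε := by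
    by_contra! hgt
    set q := T + (f T - ε) / δ
    have hTq : T ≤ q :=
      le_add_of_nonneg_right (div_nonneg (sub_nonneg.2 (hgt T le_rfl).le) hδ.le)
    have := decay T q le_rfl hTq fun u hu => (hgt u hu.1.le).le
    have hδq : δ * (q - T) = f T - ε := by
      simp only [q, add_sub_cancel_left, mul_div_cancel₀ _ hδ.ne']
    linarith [hgt q hTq]
  filter_upwards [eventually_ge_atTop t₀] with t ht
  by_contra! hlt
  obtain ⟨σ, hσ, hσε, hgt⟩ := hf.continuous.continuousOn.exists_forall_Ioc_lt_of_le ht ht₀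
  have := decay σ t (hTt₀.trans hσ.1) hσ.2 fun u hu => (hgt u hu).le
  nlinarith [hσ.2]

theorem Filter.limsup_nonpos_of_forall_eventually_le {α : Type*} {l : Filter α} {f : α → ℝ}
    (h : ∀ ε > 0, ∀ᶠ x in l, f x ≤ ε) : limsup f l ≤ 0 := by
  rw [limsup_eq]
  by_cases hbdd : BddBelow {a | ∀ᶠ x in l, f x ≤ a}
  · exact le_of_forall_pos_le_add fun ε hε => by simpa using csInf_le hbdd (h ε hε)
  -- `sInf` of a set of reals that is not bounded below is the junk value `0`
  · rw [Real.sInf_of_not_bddBelow hbdd]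

/-- ODE comparison lemma: if a locally Lipschitz function `ρ̃`
satisfies, for every `ε > 0`, `ρ̃' < −δ_ε` a.e. on `{t ≥ T_ε : ρ̃(t) ≥ ε}`, then
`limsup_{t→∞} ρ̃(t) ≤ 0`. -/
theorem limsup_nonpos_of_ae_decay (ρ : ℝ → ℝ)
    (hlip : LocallyLipschitz ρ)
    (hdec : ∀ ε : ℝ, 0 < ε → ∃ δ : ℝ, 0 < δ ∧ ∃ T : ℝ, 0 ≤ T ∧
      ∀ᵐ t : ℝ ∂volume, T ≤ t → ε ≤ ρ t → deriv ρ t < -δ) :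
    Filter.limsup ρ Filter.atTop ≤ 0 := by
  refine Filter.limsup_nonpos_of_forall_eventually_le fun ε hε => ?_
  obtain ⟨δ, hδ, T, -, hT⟩ := hdec ε hε
  exact hlip.eventually_le_of_ae_deriv_lt hδ hT
end
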